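/- arXiv:math/0601504 — 3 statements merged into one kernel-verified Lean document; each statement's English description precedes it below -/
import Mathlib

section
/- With notation as above (Hecke algebra H of (W,S), parabolic subgroup W_J, minimal coset representatives W^J, projection p_J : H → H_J): for all u, u' ∈ W^J one has p_J(T̃_{u⁻¹} T̃_{u'}) = δ_{u,u'} T̃_1. -/
open scoped Classical

namespace HPO

variable {B W : Type*} [Group W] {M : CoxeterMatrix B} (cs : CoxeterSystem M W)

local prefix:100 "s" => cs.simple
local prefix:100 "π" => cs.wordProd
local prefix:100 "ℓ" => cs.length
local prefix:100 "ris" => cs.rightInvSeq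

lemma conj_iff (g a b : W) : (g * a * g⁻¹ = b) ↔ (a = g⁻¹ * b * g) := by
  constructor
  · intro h; rw [← h]; group
  · intro h; rw [h]; group

noncomputable def sgnFun (i : B) (p : W × ℤˣ) : W × ℤˣ :=
  (s i * p.1 * s i, if p.1 = s i then -p.2 else p.2)

lemma sgnFun_involutive (i : B) : Function.Involutive (sgnFun cs i) := by
  rintro ⟨t, ε⟩
  by_cases hp : t = s i
  · subst hp
    simp [sgnFun, cs.simple_mul_simple_self]
  · have hcond : ¬ (s i * t * s i = s i) := by
      intro h
      apply hp
      have := congrArg (fun x => s i * x * s i) h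
      simpa [mul_assoc, cs.simple_mul_simple_cancel_left,
        cs.simple_mul_simple_self] using this
    simp only [sgnFun, if_neg hp, if_neg hcond]
    rw [show s i * (s i * t * s i) * s i = (s i * s i) * t * (s i * s i) by group,
      cs.simple_mul_simple_self]
    simp

/-- The sign-flipping involution used to build the reflection representation. -/
noncomputable def sgn (i : B) : Equiv.Perm (W × ℤˣ) :=
  Function.Involutive.toPerm (sgnFun cs i) (sgnFun_involutive cs i)

lemma sgn_apply (i : B) (t : W) (ε : ℤˣ) :
    sgn cs i (t, ε) = (s i * t * s i, if t = s i then -ε else ε) := rfl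

lemma simple_conj_base (i i' : B) :
    s i' * (s i * s i') = (s i * s i')⁻¹ * s i' := by
  rw [mul_inv_rev, cs.inv_simple, cs.inv_simple]
  group

lemma simple_conj_pow (i i' : B) (n : ℕ) :
    s i' * (s i * s i') ^ n = ((s i * s i') ^ n)⁻¹ * s i' := by
  induction n with
  | zero => simp
  | succ n ih =>
    calc s i' * (s i * s i') ^ (n+1)
        = (s i' * (s i * s i') ^ n) * (s i * s i') := by rw [pow_succ, ← mul_assoc]
      _ = ((s i * s i') ^ n)⁻¹ * (s i' * (s i * s i')) := by rw [ih, mul_assoc]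
      _ = ((s i * s i') ^ n)⁻¹ * ((s i * s i')⁻¹ * s i') := by rw [simple_conj_base]
      _ = ((s i * s i') ^ (n+1))⁻¹ * s i' := by
          conv_rhs => rw [pow_succ', mul_inv_rev, mul_assoc]

lemma simple_conj_pow'' (i i' : B) (m : ℕ) :
    ((s i * s i') ^ m)⁻¹ * s i' * (s i * s i') ^ m
      = ((s i * s i') ^ (2 * m))⁻¹ * s i' := by
  rw [mul_assoc, simple_conj_pow, ← mul_assoc, ← mul_inv_rev, ← pow_add, two_mul]

lemma simple_conj_pow' (i i' : B) (n : ℕ) :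
    ((s i * s i') ^ n)⁻¹ * (s i' * s i * s i') * (s i * s i') ^ n
      = ((s i * s i') ^ (2 * n + 1))⁻¹ * s i' := by
  have h1 : s i' * s i * s i' = ((s i * s i') ^ 1)⁻¹ * s i' := by
    rw [pow_one, mul_inv_rev, cs.inv_simple, cs.inv_simple]
  rw [h1]
  rw [show ((s i * s i') ^ n)⁻¹ * (((s i * s i') ^ 1)⁻¹ * s i') * (s i * s i') ^ n
      = ((s i * s i') ^ n)⁻¹ * ((s i * s i') ^ 1)⁻¹ * (s i' * (s i * s i') ^ n) from by group]
  rw [simple_conj_pow]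
  rw [show 2 * n + 1 = n + 1 + n from by omega, pow_add, pow_add]
  group

lemma sgn_pow_apply (i i' : B) (n : ℕ) (t : W) (ε : ℤˣ) :
    ((sgn cs i * sgn cs i') ^ n) (t, ε) =
      ((s i * s i') ^ n * t * ((s i * s i') ^ n)⁻¹,
        (-1 : ℤˣ) ^ (((List.range (2 * n)).map
          (fun j => ((s i * s i') ^ j)⁻¹ * s i')).count t) * ε) := by
  induction n with
  | zero => simp
  | succ n ih =>
    have e1 : ((s i * s i') ^ n * t * ((s i * s i') ^ n)⁻¹ = s i')
        ↔ (t = ((s i * s i') ^ (2 * n))⁻¹ * s i') := by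
      rw [conj_iff, simple_conj_pow'']
    have e2 : (s i' * ((s i * s i') ^ n * t * ((s i * s i') ^ n)⁻¹) * s i' = s i) ↔
        (t = ((s i * s i') ^ (2 * n + 1))⁻¹ * s i') := by
      rw [show s i' * ((s i * s i') ^ n * t * ((s i * s i') ^ n)⁻¹) * s i' =
            s i' * ((s i * s i') ^ n * t * ((s i * s i') ^ n)⁻¹) * (s i')⁻¹ from by
              rw [cs.inv_simple],
        conj_iff, cs.inv_simple, ← simple_conj_pow' cs i i' n, conj_iff]
    have hfirst : s i * (s i' * ((s i * s i') ^ n * t * ((s i * s i') ^ n)⁻¹) * s i') * s i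
        = (s i * s i') ^ (n+1) * t * ((s i * s i') ^ (n+1))⁻¹ := by
      rw [pow_succ', mul_inv_rev ((s i * s i')) ((s i * s i') ^ n),
        mul_inv_rev (s i) (s i'), cs.inv_simple, cs.inv_simple]
      group
    have hrange : (List.range (2 * (n+1))).map (fun j => ((s i * s i') ^ j)⁻¹ * s i') =
        ((List.range (2 * n)).map (fun j => ((s i * s i') ^ j)⁻¹ * s i'))
          ++ [((s i * s i') ^ (2*n))⁻¹ * s i', ((s i * s i') ^ (2*n+1))⁻¹ * s i'] := by
      have h2 : 2 * (n+1) = (2*n + 1) + 1 := by ring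
      rw [h2, List.range_succ, List.range_succ]
      simp
    rw [pow_succ', Equiv.Perm.mul_apply, ih, Equiv.Perm.mul_apply, sgn_apply, sgn_apply,
      hrange, List.count_append, Prod.mk.injEq]
    refine ⟨hfirst, ?_⟩
    by_cases h1 : t = ((s i * s i') ^ (2*n))⁻¹ * s i' <;>
      by_cases h2 : t = ((s i * s i') ^ (2*n+1))⁻¹ * s i'
    · have hcnt : ([((s i * s i') ^ (2*n))⁻¹ * s i',
          ((s i * s i') ^ (2*n+1))⁻¹ * s i'].count t) = 2 := by
        simp [List.count_cons, ← h1, ← h2]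
      rw [hcnt]
      simp only [e1, e2, if_pos h1, if_pos h2]
      rw [show (List.count t ((List.range (2 * n)).map
          (fun j => ((s i * s i') ^ j)⁻¹ * s i')) + 2)
        = (List.count t ((List.range (2 * n)).map
          (fun j => ((s i * s i') ^ j)⁻¹ * s i')) + 1) + 1 from rfl]
      rw [pow_succ, pow_succ]
      simp [mul_assoc, neg_mul, mul_neg]
    · have hcnt : ([((s i * s i') ^ (2*n))⁻¹ * s i',
          ((s i * s i') ^ (2*n+1))⁻¹ * s i'].count t) = 1 := by
        simp [List.count_cons, ← h1, Ne.symm h2]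
      rw [hcnt]
      simp only [e1, e2, if_pos h1, if_neg h2]
      rw [pow_succ]
      simp [mul_assoc, neg_mul, mul_neg]
    · have hcnt : ([((s i * s i') ^ (2*n))⁻¹ * s i',
          ((s i * s i') ^ (2*n+1))⁻¹ * s i'].count t) = 1 := by
        simp [List.count_cons, ← h2, Ne.symm h1]
      rw [hcnt]
      simp only [e1, e2, if_neg h1, if_pos h2]
      rw [pow_succ]
      simp [mul_assoc, neg_mul, mul_neg]
    · have hcnt : ([((s i * s i') ^ (2*n))⁻¹ * s i',
          ((s i * s i') ^ (2*n+1))⁻¹ * s i'].count t) = 0 := by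
        simp [List.count_cons, Ne.symm h1, Ne.symm h2]
      rw [hcnt]
      simp only [e1, e2, if_neg h1, if_neg h2]
      simp

lemma sgn_liftable : M.IsLiftable (sgn cs) := by
  intro i i'
  apply Equiv.ext
  rintro ⟨t, ε⟩
  rw [Equiv.Perm.one_apply, sgn_pow_apply, cs.simple_mul_simple_pow]
  have hcount : ((List.range (2 * M i i')).map
      (fun j => ((s i * s i') ^ j)⁻¹ * s i')).count t
      = 2 * ((List.range (M i i')).map
      (fun j => ((s i * s i') ^ j)⁻¹ * s i')).count t := by
    rw [two_mul (M i i'), List.range_add, List.map_append, List.count_append, List.map_map]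
    have hmap : (List.range (M i i')).map ((fun j => ((s i * s i') ^ j)⁻¹ * s i')
        ∘ (fun j => M i i' + j)) = (List.range (M i i')).map
        (fun j => ((s i * s i') ^ j)⁻¹ * s i') := by
      apply List.map_congr_left
      intro j _
      simp only [Function.comp_apply]
      rw [pow_add, cs.simple_mul_simple_pow, one_mul]
    rw [hmap]
    omega
  rw [hcount, pow_mul]
  simp


noncomputable def rho : W →* Equiv.Perm (W × ℤˣ) := cs.lift ⟨sgn cs, sgn_liftable cs⟩

lemma conj_injective (g h : W) : Function.Injective (fun x : W => g * x * h) := by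
  intro a b hab
  simp only at hab
  exact mul_left_cancel (mul_right_cancel hab)

lemma count_map_conj (l : List W) (g a : W) :
    (l.map (fun x => g⁻¹ * x * g)).count (g⁻¹ * a * g) = l.count a :=
  List.count_map_of_injective _ _ (conj_injective _ _) _

lemma rho_wordProd (ω : List B) (t : W) (ε : ℤˣ) :
    rho cs (π ω) (t, ε) = (π ω * t * (π ω)⁻¹, (-1 : ℤˣ) ^ ((ris ω).count t) * ε) := by
  induction ω with
  | nil => simp [CoxeterSystem.rightInvSeq]
  | cons i ω ih =>
    rw [cs.wordProd_cons, map_mul, Equiv.Perm.mul_apply, ih]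
    have hsimple : rho cs (s i) = sgn cs i := cs.lift_apply_simple (sgn_liftable cs) i
    rw [hsimple, sgn_apply]
    have hr : ris (i::ω) = ((π ω)⁻¹ * s i * π ω) :: ris ω := rfl
    have hcond : (π ω * t * (π ω)⁻¹ = s i) ↔ (t = (π ω)⁻¹ * s i * π ω) := conj_iff _ _ _
    have hfst : s i * (π ω * t * (π ω)⁻¹) * s i = (s i * π ω) * t * (s i * π ω)⁻¹ := by
      rw [mul_inv_rev, cs.inv_simple]
      group
    rw [hr, Prod.mk.injEq]
    constructor
    · exact hfst
    · rw [List.count_cons]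
      by_cases h : t = (π ω)⁻¹ * s i * π ω
      · rw [if_pos (hcond.mpr h), if_pos (by rw [h]; exact beq_self_eq_true _ : ((π ω)⁻¹ * s i * π ω == t) = true)]
        rw [pow_succ, mul_assoc, neg_one_mul, mul_neg]
      · rw [if_neg (fun hc => h (hcond.mp hc)),
          if_neg (by simp only [beq_iff_eq]; exact fun hc => h hc.symm : ¬ (((π ω)⁻¹ * s i * π ω == t) = true))]
        rw [add_zero]

lemma rho_parity {ω ω' : List B} (h : π ω = π ω') (t : W) :
    (-1 : ℤˣ) ^ ((ris ω).count t) = (-1 : ℤˣ) ^ ((ris ω').count t) := by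
  have h1 := rho_wordProd cs ω t 1
  have h2 := rho_wordProd cs ω' t 1
  rw [h, h2] at h1
  have := congrArg Prod.snd h1
  simpa using this.symm

lemma ris_append (ω ω' : List B) :
    ris (ω ++ ω') = (ris ω).map (fun x => (π ω')⁻¹ * x * π ω') ++ ris ω' := by
  induction ω with
  | nil => simp [CoxeterSystem.rightInvSeq]
  | cons i ω ih =>
    show ((π (ω ++ ω'))⁻¹ * s i * π (ω ++ ω')) :: ris (ω ++ ω') = _
    rw [ih, cs.wordProd_append]
    show _ = (((π ω')⁻¹ * ((π ω)⁻¹ * s i * π ω) * π ω') :: (ris ω).map _) ++ ris ω'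
    rw [List.cons_append]
    congr 1
    rw [mul_inv_rev]
    group

lemma ris_eq_map_lis (ω : List B) :
    ris ω = (cs.leftInvSeq ω).map (fun x => (π ω)⁻¹ * x * π ω) := by
  induction ω with
  | nil => simp [CoxeterSystem.rightInvSeq, CoxeterSystem.leftInvSeq]
  | cons i ω ih =>
    show ((π ω)⁻¹ * s i * π ω) :: ris ω
      = (s i :: (cs.leftInvSeq ω).map (MulAut.conj (s i))).map
          (fun x => (π (i :: ω))⁻¹ * x * π (i :: ω))
    rw [List.map_cons, ih]
    congr 1
    · simp only [cs.wordProd_cons, mul_inv_rev, cs.inv_simple, mul_assoc,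
        cs.simple_mul_simple_cancel_left]
    · rw [List.map_map]
      apply List.map_congr_left
      intro x _
      simp only [Function.comp_apply, MulAut.conj_apply, cs.wordProd_cons, mul_inv_rev,
        cs.inv_simple, mul_assoc, cs.simple_mul_simple_cancel_left]

lemma refl_word_odd {t : W} (ht : cs.IsReflection t) {β : List B} (hβ : π β = t) :
    (-1 : ℤˣ) ^ ((ris β).count t) = -1 := by
  obtain ⟨w, i, rfl⟩ := ht
  obtain ⟨α, hα⟩ := cs.wordProd_surjective w
  have hγ : π (α ++ ([i] ++ α.reverse)) = w * s i * w⁻¹ := by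
    rw [cs.wordProd_append, cs.wordProd_append, cs.wordProd_reverse, cs.wordProd_singleton,
      hα, mul_assoc]
  rw [rho_parity cs (show π β = π (α ++ ([i] ++ α.reverse)) by rw [hβ, hγ])]
  rw [ris_append, ris_append, List.count_append, List.count_append]
  have hq : π ([i] ++ α.reverse) = s i * w⁻¹ := by
    rw [cs.wordProd_append, cs.wordProd_reverse, cs.wordProd_singleton, hα]
  have hrevα : π α.reverse = w⁻¹ := by rw [cs.wordProd_reverse, hα]
  -- first block
  have hc1 : ((ris α).map (fun x => (π ([i] ++ α.reverse))⁻¹ * x * π ([i] ++ α.reverse))).count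
      (w * s i * w⁻¹) = (ris α).count (s i) := by
    rw [hq]
    have hcm := count_map_conj (ris α) (s i * w⁻¹) (s i)
    rw [show (s i * w⁻¹)⁻¹ * s i * (s i * w⁻¹) = w * s i * w⁻¹ from by
      simp only [mul_inv_rev, inv_inv, cs.inv_simple, mul_assoc,
        cs.simple_mul_simple_cancel_left]] at hcm
    exact hcm
  -- middle block
  have hc2 : ((ris [i]).map (fun x => (π α.reverse)⁻¹ * x * π α.reverse)).count
      (w * s i * w⁻¹) = 1 := by
    rw [hrevα, cs.rightInvSeq_singleton, List.map_singleton, inv_inv]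
    simp
  -- last block
  have hc3 : (ris α.reverse).count (w * s i * w⁻¹) = (cs.leftInvSeq α).count (w * s i * w⁻¹) := by
    rw [cs.rightInvSeq_reverse, List.count_reverse]
  have hc4 : (ris α).count (s i) = (cs.leftInvSeq α).count (w * s i * w⁻¹) := by
    rw [ris_eq_map_lis, hα]
    have hcm := count_map_conj (cs.leftInvSeq α) w (w * s i * w⁻¹)
    rw [show w⁻¹ * (w * s i * w⁻¹) * w = s i from by group] at hcm
    exact hcm
  rw [hc1, hc2, hc3, hc4]
  have : (cs.leftInvSeq α).count (w * s i * w⁻¹) + (1 + (cs.leftInvSeq α).count (w * s i * w⁻¹))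
      = 2 * (cs.leftInvSeq α).count (w * s i * w⁻¹) + 1 := by ring
  rw [this, pow_succ, pow_mul]
  simp

theorem strong_exchange_mem {ω : List B} (hred : cs.IsReduced ω) {t : W}
    (ht : cs.IsReflection t) (hlen : ℓ (π ω * t) < ℓ (π ω)) : t ∈ ris ω := by
  obtain ⟨ψ, hψred, hψ⟩ := cs.exists_reduced_word' (π ω * t)
  obtain ⟨β, hβ⟩ := cs.wordProd_surjective t
  have keyπ : π (ψ ++ β) = π ω := by
    rw [cs.wordProd_append, ← hψ, hβ, mul_assoc, ht.mul_self, mul_one]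
  have hpar := rho_parity cs keyπ.symm t
  rw [ris_append, List.count_append] at hpar
  have hcψ : ((ris ψ).map (fun x => (π β)⁻¹ * x * π β)).count t = (ris ψ).count t := by
    rw [hβ]
    have hcm := count_map_conj (ris ψ) t t
    rw [show t⁻¹ * t * t = t from by group] at hcm
    exact hcm
  have hψ0 : (ris ψ).count t = 0 := by
    refine List.count_eq_zero_of_not_mem ?_
    intro hmem
    have hri := cs.isRightInversion_of_mem_rightInvSeq hψred hmem
    rw [← hψ] at hri
    have h2 := hri.2
    rw [mul_assoc, ht.mul_self, mul_one] at h2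
    omega
  rw [hcψ, hψ0, zero_add, refl_word_odd cs ht hβ] at hpar
  by_contra hmem
  rw [List.count_eq_zero_of_not_mem hmem] at hpar
  simp at hpar

theorem strong_exchange {ω : List B} (hred : cs.IsReduced ω) {t : W}
    (ht : cs.IsReflection t) (hlen : ℓ (π ω * t) < ℓ (π ω)) :
    ∃ j < ω.length, π ω * t = π (ω.eraseIdx j) := by
  have hmem := strong_exchange_mem cs hred ht hlen
  obtain ⟨j, hj, hget⟩ := List.mem_iff_getElem.mp hmem
  have hj' : j < ω.length := by simpa using hj
  refine ⟨j, hj', ?_⟩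
  rw [← cs.wordProd_mul_getD_rightInvSeq ω j]
  congr 1
  rw [List.getD_eq_getElem _ _ hj]
  exact hget.symm


lemma exists_jword {J : Set B} {a : W} (ha : a ∈ Subgroup.closure (cs.simple '' J)) :
    ∃ l : List B, (∀ b ∈ l, b ∈ J) ∧ π l = a := by
  induction ha using Subgroup.closure_induction with
  | mem x hx =>
    obtain ⟨j, hj, rfl⟩ := hx
    exact ⟨[j], by simpa using hj, cs.wordProd_singleton j⟩
  | one => exact ⟨[], by simp, cs.wordProd_nil⟩
  | mul x y hx hy ihx ihy =>
    obtain ⟨l1, hl1, hπ1⟩ := ihx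
    obtain ⟨l2, hl2, hπ2⟩ := ihy
    refine ⟨l1 ++ l2, ?_, by rw [cs.wordProd_append, hπ1, hπ2]⟩
    intro b hb
    rcases List.mem_append.mp hb with h | h
    exacts [hl1 b h, hl2 b h]
  | inv x hx ihx =>
    obtain ⟨l, hl, hπ⟩ := ihx
    exact ⟨l.reverse, fun b hb => hl b (List.mem_reverse.mp hb),
      by rw [cs.wordProd_reverse, hπ]⟩

lemma reduce_jword {J : Set B} : ∀ n (l : List B), l.length = n → (∀ b ∈ l, b ∈ J) →
    ∃ l' : List B, (∀ b ∈ l', b ∈ J) ∧ π l' = π l ∧ cs.IsReduced l' := by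
  intro n
  induction n using Nat.strong_induction_on with
  | _ n ih =>
    intro l hlen hl
    by_cases hred : cs.IsReduced l
    · exact ⟨l, hl, rfl, hred⟩
    have hlt : ℓ (π l) < l.length := lt_of_le_of_ne (cs.length_wordProd_le l) hred
    have hP : ∃ m, ℓ (π (l.take m)) < m := ⟨l.length, by rwa [List.take_length]⟩
    have hk₀ : ℓ (π (l.take (Nat.find hP))) < Nat.find hP := Nat.find_spec hP
    have hk₀pos : 0 < Nat.find hP := by
      rcases Nat.eq_zero_or_pos (Nat.find hP) with h | h
      · rw [h] at hk₀; omega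
      · exact h
    have hk₀le : Nat.find hP ≤ l.length := Nat.find_min' hP (by rwa [List.take_length])
    set k := Nat.find hP - 1 with hkdef
    have hklt : k < l.length := by omega
    have hnotlt : ¬ ℓ (π (l.take k)) < k := Nat.find_min hP (by omega)
    have htklen : (l.take k).length = k := by
      rw [List.length_take]; omega
    have hredk : cs.IsReduced (l.take k) := by
      have h1 : ℓ (π (l.take k)) ≤ (l.take k).length := cs.length_wordProd_le _
      rw [htklen] at h1
      have h2 : ℓ (π (l.take k)) = k := by omega
      rw [CoxeterSystem.IsReduced, htklen, h2]
    have htake : l.take k ++ [l[k]] = l.take (k + 1) := List.take_concat_get' l k hklt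
    have hk1 : k + 1 = Nat.find hP := by omega
    have hlenk : ℓ (π (l.take k)) = k := by
      have h1 : ℓ (π (l.take k)) ≤ (l.take k).length := cs.length_wordProd_le _
      rw [htklen] at h1
      omega
    have hlen1 : ℓ (π (l.take k) * s (l[k])) < ℓ (π (l.take k)) := by
      have h2 : π (l.take (k+1)) = π (l.take k) * s (l[k]) := by
        rw [← htake, cs.wordProd_append, cs.wordProd_singleton]
      have h3 : ℓ (π (l.take (k+1))) < k + 1 := by rw [hk1]; exact hk₀
      rw [h2] at h3
      have h4 := cs.length_mul_simple (π (l.take k)) (l[k])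
      omega
    obtain ⟨j, hj, hex⟩ := strong_exchange cs hredk (cs.isReflection_simple (l[k])) hlen1
    rw [htklen] at hj
    have hπl' : π (((l.take k).eraseIdx j) ++ l.drop (k+1)) = π l := by
      rw [cs.wordProd_append, ← hex]
      have h5 : π (l.take k) * s (l[k]) = π (l.take (k+1)) := by
        rw [← htake, cs.wordProd_append, cs.wordProd_singleton]
      rw [h5, ← cs.wordProd_append, List.take_append_drop]
    have hll' : ∀ b ∈ ((l.take k).eraseIdx j) ++ l.drop (k+1), b ∈ J := by
      intro b hb
      rcases List.mem_append.mp hb with h | h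
      · exact hl b ((List.take_sublist k l).subset ((List.eraseIdx_sublist _ j).subset h))
      · exact hl b ((List.drop_sublist (k+1) l).subset h)
    have hjlt : j < (l.take k).length := by rwa [htklen]
    have hlenl' : (((l.take k).eraseIdx j) ++ l.drop (k+1)).length < n := by
      rw [List.length_append]
      have h6 : ((l.take k).eraseIdx j).length + 1 = (l.take k).length :=
        List.length_eraseIdx_add_one hjlt
      have h7 : (l.drop (k+1)).length = l.length - (k+1) := List.length_drop
      omega
    obtain ⟨l'', h1, h2, h3⟩ := ih _ hlenl' _ rfl hll'
    exact ⟨l'', h1, by rw [h2, hπl'], h3⟩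

lemma exists_reduced_jword {J : Set B} {a : W} (ha : a ∈ Subgroup.closure (cs.simple '' J)) :
    ∃ l : List B, (∀ b ∈ l, b ∈ J) ∧ π l = a ∧ cs.IsReduced l := by
  obtain ⟨l, hl, hπ⟩ := exists_jword cs ha
  obtain ⟨l', h1, h2, h3⟩ := reduce_jword cs l.length l rfl hl
  exact ⟨l', h1, by rw [h2, hπ], h3⟩

lemma descent_of_closure {J : Set B} {a : W} (ha : a ∈ Subgroup.closure (cs.simple '' J))
    (hne : a ≠ 1) : ∃ j ∈ J, ℓ (a * s j) < ℓ a := by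
  obtain ⟨l, hl, hπ, hred⟩ := exists_reduced_jword cs ha
  rcases l.eq_nil_or_concat with rfl | ⟨l₀, j, rfl⟩
  · exact absurd hπ.symm (by simpa using hne)
  · refine ⟨j, hl j (by simp), ?_⟩
    have h1 : a * s j = π l₀ := by
      rw [← hπ, List.concat_eq_append, cs.wordProd_append, cs.wordProd_singleton,
        cs.simple_mul_simple_cancel_right]
    have h2 : ℓ (π l₀) ≤ l₀.length := cs.length_wordProd_le _
    have h3 : ℓ a = l₀.length + 1 := by
      have := hred
      rw [CoxeterSystem.IsReduced, hπ] at this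
      simpa using this
    rw [h1]
    omega

lemma simple_mem_closure {J : Set B} {j : B} (hj : j ∈ J) :
    s j ∈ Subgroup.closure (cs.simple '' J) :=
  Subgroup.subset_closure ⟨j, hj, rfl⟩

lemma length_min_mul {J : Set B} {w : W}
    (hw : ∀ c ∈ Subgroup.closure (cs.simple '' J), ℓ w ≤ ℓ (w * c)) :
    ∀ a ∈ Subgroup.closure (cs.simple '' J), ℓ (w * a) = ℓ w + ℓ a := by
  have H : ∀ n, ∀ a ∈ Subgroup.closure (cs.simple '' J), ℓ a = n → ℓ (w * a) = ℓ w + n := by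
    intro n
    induction n using Nat.strong_induction_on with
    | _ n ih =>
      intro a ha hn
      by_cases h1 : a = 1
      · subst h1
        rw [mul_one]
        rw [cs.length_one] at hn
        omega
      obtain ⟨j, hjJ, hdesc⟩ := descent_of_closure cs ha h1
      have hsj : s j ∈ Subgroup.closure (cs.simple '' J) := simple_mem_closure cs hjJ
      have ha' : a * s j ∈ Subgroup.closure (cs.simple '' J) := mul_mem ha hsj
      have hlena' : ℓ (a * s j) + 1 = n := by
        have := cs.length_mul_simple a j
        omega
      have hIH : ℓ (w * (a * s j)) = ℓ w + (n - 1) :=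
        ih (n-1) (by omega) _ ha' (by omega)
      have haa : a = (a * s j) * s j := (cs.simple_mul_simple_cancel_right j).symm
      have hwa : w * a = (w * (a * s j)) * s j := by
        conv_lhs => rw [haa]
        rw [← mul_assoc]
      rcases cs.length_mul_simple (w * (a * s j)) j with hup | hdown
      · rw [hwa, hup, hIH]; omega
      · exfalso
        obtain ⟨ω₁, hω₁red, hω₁⟩ := cs.exists_reduced_word' w
        obtain ⟨ψ, hψJ, hψπ, hψred⟩ := exists_reduced_jword cs ha'
        have hω₁len : ω₁.length = ℓ w := by
          rw [CoxeterSystem.IsReduced] at hω₁red; rw [← hω₁red, ← hω₁]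
        have hψlen : ψ.length = n - 1 := by
          rw [CoxeterSystem.IsReduced] at hψred; rw [← hψred, hψπ]; omega
        have hcat : π (ω₁ ++ ψ) = w * (a * s j) := by
          rw [cs.wordProd_append, ← hω₁, hψπ]
        have hcatred : cs.IsReduced (ω₁ ++ ψ) := by
          rw [CoxeterSystem.IsReduced, hcat, List.length_append, hIH, hω₁len, hψlen]
        have hexlt : ℓ (π (ω₁ ++ ψ) * s j) < ℓ (π (ω₁ ++ ψ)) := by
          rw [hcat]
          omega
        obtain ⟨kk, hkk, hkeq⟩ := strong_exchange cs hcatred (cs.isReflection_simple j) hexlt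
        rw [hcat] at hkeq
        by_cases hcase : kk < ω₁.length
        · rw [List.eraseIdx_append_of_lt_length hcase, cs.wordProd_append, hψπ] at hkeq
          -- w * (a * s j) * s j = π (ω₁.eraseIdx kk) * (a * s j)
          have h8 : w * a = π (ω₁.eraseIdx kk) * (a * s j) := by
            rw [hwa, hkeq]
          have hmemc : (a * s j) * a⁻¹ ∈ Subgroup.closure (cs.simple '' J) :=
            mul_mem ha' (inv_mem ha)
          have h10 : w * ((a * s j) * a⁻¹) = π (ω₁.eraseIdx kk) := by
            calc w * ((a * s j) * a⁻¹) = (w * a) * (s j * a⁻¹) := by group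
              _ = (π (ω₁.eraseIdx kk) * (a * s j)) * (s j * a⁻¹) := by rw [h8]
              _ = π (ω₁.eraseIdx kk) := by
                  rw [show (π (ω₁.eraseIdx kk) * (a * s j)) * (s j * a⁻¹)
                      = π (ω₁.eraseIdx kk) * (a * s j * s j) * a⁻¹ from by group,
                    cs.simple_mul_simple_cancel_right, mul_inv_cancel_right]
          have h11 := hw _ hmemc
          rw [h10] at h11
          have h12 : ℓ (π (ω₁.eraseIdx kk)) ≤ (ω₁.eraseIdx kk).length :=
            cs.length_wordProd_le _
          have h13 : (ω₁.eraseIdx kk).length + 1 = ω₁.length :=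
            List.length_eraseIdx_add_one hcase
          omega
        · push_neg at hcase
          rw [List.eraseIdx_append_of_length_le hcase, cs.wordProd_append, ← hω₁] at hkeq
          have h14 : a = π (ψ.eraseIdx (kk - ω₁.length)) := by
            have h15 : w * a = w * π (ψ.eraseIdx (kk - ω₁.length)) := by
              rw [hwa, hkeq]
            exact mul_left_cancel h15
          have h16 : kk - ω₁.length < ψ.length := by
            rw [List.length_append] at hkk
            omega
          have h17 : (ψ.eraseIdx (kk - ω₁.length)).length + 1 = ψ.length :=
            List.length_eraseIdx_add_one h16
          have h18 : ℓ a ≤ (ψ.eraseIdx (kk - ω₁.length)).length := by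
            rw [h14]; exact cs.length_wordProd_le _
          omega
  intro a ha
  exact H (ℓ a) a ha rfl


section Hecke

variable {H : Type*} [Ring H] [Algebra (LaurentPolynomial ℤ) H]
  (T : Module.Basis W (LaurentPolynomial ℤ) H)

lemma Tmul_simple_left
    (hmul : ∀ w w' : W, ℓ (w * w') = ℓ w + ℓ w' → T w * T w' = T (w * w'))
    (hquad : ∀ i : B, T (s i) * T (s i) =
      1 + ((LaurentPolynomial.T 1 - LaurentPolynomial.T (-1) : LaurentPolynomial ℤ)) • T (s i))
    (i : B) (x : W) (hlt : ℓ (s i * x) < ℓ x) :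
    T (s i) * T x = T (s i * x)
      + ((LaurentPolynomial.T 1 - LaurentPolynomial.T (-1) : LaurentPolynomial ℤ)) • T x := by
  have hdich := cs.length_simple_mul x i
  have hlen : ℓ (s i * (s i * x)) = ℓ (s i) + ℓ (s i * x) := by
    rw [cs.simple_mul_simple_cancel_left, cs.length_simple]
    omega
  have hT : T x = T (s i) * T (s i * x) := by
    rw [hmul _ _ hlen, cs.simple_mul_simple_cancel_left]
  calc T (s i) * T x = (T (s i) * T (s i)) * T (s i * x) := by
        conv_lhs => rw [hT]
        rw [← mul_assoc]
    _ = (1 + ((LaurentPolynomial.T 1 - LaurentPolynomial.T (-1) : LaurentPolynomial ℤ))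
          • T (s i)) * T (s i * x) := by rw [hquad i]
    _ = T (s i * x) + ((LaurentPolynomial.T 1 - LaurentPolynomial.T (-1) : LaurentPolynomial ℤ))
          • (T (s i) * T (s i * x)) := by rw [add_mul, one_mul, smul_mul_assoc]
    _ = _ := by rw [← hT]

lemma pJ_mul
    (hone : T 1 = 1)
    (hmul : ∀ w w' : W, ℓ (w * w') = ℓ w + ℓ w' → T w * T w' = T (w * w'))
    (hquad : ∀ i : B, T (s i) * T (s i) =
      1 + ((LaurentPolynomial.T 1 - LaurentPolynomial.T (-1) : LaurentPolynomial ℤ)) • T (s i))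
    (J : Set B) :
    ∀ n (u : W), ℓ u = n → (∀ a ∈ Subgroup.closure (cs.simple '' J), ℓ u ≤ ℓ (u * a)) →
    ∀ x : W,
    (T.constr ℕ fun w : W => if w ∈ Subgroup.closure (cs.simple '' J) then T w else 0)
        (T u⁻¹ * T x)
      = if u⁻¹ * x ∈ Subgroup.closure (cs.simple '' J) then T (u⁻¹ * x) else 0 := by
  intro n
  induction n using Nat.strong_induction_on with
  | _ n ih =>
    intro u hn hu x
    by_cases hu1 : u = 1
    · subst hu1
      simp only [inv_one, one_mul, hone]
      rw [Module.Basis.constr_basis]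
    · obtain ⟨i, hi⟩ := cs.exists_leftDescent_of_ne_one hu1
      have hi' : ℓ (s i * u) < ℓ u := hi
      have hvlen : ℓ (s i * u) + 1 = ℓ u := by
        have := cs.length_simple_mul u i
        omega
      have hv_min : ∀ a ∈ Subgroup.closure (cs.simple '' J),
          ℓ (s i * u) ≤ ℓ ((s i * u) * a) := by
        intro a haC
        have h1 : (s i * u) * a = s i * (u * a) := by group
        have h2 := cs.length_simple_mul (u * a) i
        have h3 := hu a haC
        rw [h1]
        omega
      have hui : u⁻¹ = (s i * u)⁻¹ * s i := by
        rw [mul_inv_rev, cs.inv_simple, cs.simple_mul_simple_cancel_right]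
      have hlen2 : ℓ ((s i * u)⁻¹ * s i) = ℓ ((s i * u)⁻¹) + ℓ (s i) := by
        rw [← hui, cs.length_inv, cs.length_inv, cs.length_simple]
        omega
      have hTu : T u⁻¹ = T ((s i * u)⁻¹) * T (s i) := by
        rw [hmul _ _ hlen2, ← hui]
      rcases cs.length_simple_mul x i with hup | hdown
      · -- length goes up : T (s i) * T x = T (s i * x)
        have hstep : T (s i) * T x = T (s i * x) := by
          rw [hmul _ _ (by rw [cs.length_simple]; omega)]
        have hcomb : T u⁻¹ * T x = T ((s i * u)⁻¹) * T (s i * x) := by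
          rw [hTu, mul_assoc, hstep]
        rw [hcomb, ih (n-1) (by omega) (s i * u) (by omega) hv_min (s i * x)]
        have hgrp : (s i * u)⁻¹ * (s i * x) = u⁻¹ * x := by group
        rw [hgrp]
      · -- length goes down
        have hstep := Tmul_simple_left cs T hmul hquad i x (by omega)
        have hnotC : ¬ ((s i * u)⁻¹ * x ∈ Subgroup.closure (cs.simple '' J)) := by
          intro hC
          have hx : x = (s i * u) * ((s i * u)⁻¹ * x) := by group
          have h1 : ℓ ((s i * u) * ((s i * u)⁻¹ * x)) = ℓ (s i * u) + ℓ ((s i * u)⁻¹ * x) :=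
            length_min_mul cs hv_min _ hC
          have hsx : s i * x = u * ((s i * u)⁻¹ * x) := by
            rw [mul_inv_rev, cs.inv_simple]
            group
          have h2 : ℓ (u * ((s i * u)⁻¹ * x)) = ℓ u + ℓ ((s i * u)⁻¹ * x) :=
            length_min_mul cs hu _ hC
          rw [← hx] at h1
          rw [← hsx] at h2
          omega
        have hcomb : T u⁻¹ * T x = T ((s i * u)⁻¹) * T (s i * x)
            + ((LaurentPolynomial.T 1 - LaurentPolynomial.T (-1) : LaurentPolynomial ℤ))
              • (T ((s i * u)⁻¹) * T x) := by
          rw [hTu, mul_assoc, hstep, mul_add, mul_smul_comm]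
        rw [hcomb, map_add, LinearMap.map_smul,
          ih (n-1) (by omega) (s i * u) (by omega) hv_min (s i * x),
          ih (n-1) (by omega) (s i * u) (by omega) hv_min x,
          if_neg hnotC, smul_zero, add_zero]
        have hgrp : (s i * u)⁻¹ * (s i * x) = u⁻¹ * x := by group
        rw [hgrp]

end Hecke

end HPO

/-- In the Hecke algebra of `(W,S)`: for minimal length coset representatives
`u, u' ∈ W^J`, the projection `p_J` (keeping the terms `T w` with `w ∈ W_J`)
satisfies `p_J (T u⁻¹ * T u') = δ_{u,u'} T 1`. -/
theorem hecke_projection_orthogonality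
    {B W : Type*} [Group W] {M : CoxeterMatrix B} (cs : CoxeterSystem M W)
    {H : Type*} [Ring H] [Algebra (LaurentPolynomial ℤ) H]
    (T : Module.Basis W (LaurentPolynomial ℤ) H)
    (hone : T 1 = 1)
    (hmul : ∀ w w' : W, cs.length (w * w') = cs.length w + cs.length w' →
      T w * T w' = T (w * w'))
    (hquad : ∀ i : B, T (cs.simple i) * T (cs.simple i) =
      1 + ((LaurentPolynomial.T 1 - LaurentPolynomial.T (-1) : LaurentPolynomial ℤ)) •
        T (cs.simple i))
    (J : Set B)
    (u u' : W)
    (hu : ∀ a ∈ Subgroup.closure (cs.simple '' J), cs.length u ≤ cs.length (u * a))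
    (hu' : ∀ a ∈ Subgroup.closure (cs.simple '' J), cs.length u' ≤ cs.length (u' * a)) :
    (T.constr ℕ fun w : W =>
        if w ∈ Subgroup.closure (cs.simple '' J) then T w else 0) (T u⁻¹ * T u')
      = if u = u' then T 1 else 0 := by
  rw [HPO.pJ_mul cs T hone hmul hquad J (cs.length u) u rfl hu u']
  by_cases h : u = u'
  · subst h
    rw [if_pos rfl, if_pos (by simpa using Subgroup.one_mem (Subgroup.closure (cs.simple '' J)) : u⁻¹ * u ∈ Subgroup.closure (cs.simple '' J))]
    congr 1
    simp
  · rw [if_neg h]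
    have hnot : ¬ (u⁻¹ * u' ∈ Subgroup.closure (cs.simple '' J)) := by
      intro hC
      have hC' : u'⁻¹ * u ∈ Subgroup.closure (cs.simple '' J) := by
        have heq : u'⁻¹ * u = (u⁻¹ * u')⁻¹ := by group
        rw [heq]
        exact inv_mem hC
      have h1 := HPO.length_min_mul cs hu _ hC
      have h2 := HPO.length_min_mul cs hu' _ hC'
      rw [show u * (u⁻¹ * u') = u' from by group] at h1
      rw [show u' * (u'⁻¹ * u) = u from by group] at h2
      have h3 : cs.length (u⁻¹ * u') = 0 := by omega
      have h4 : u⁻¹ * u' = 1 := cs.length_eq_zero_iff.mp h3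
      have h5 : u' = u := by simpa [mul_assoc] using congrArg (fun y => u * y) h4
      exact h h5.symm
    rw [if_neg hnot]
end

section
/- Let Λ be a set with a left W-action (w,λ) ↦ wλ for a Coxeter group W with simple reflections S, and suppose given for each λ ∈ Λ a subgroup W_λ ⊆ Stab_W(λ) with W_{wλ} = w W_λ w⁻¹. Then there is an associative 𝓐-algebra structure (𝓐 = ℤ[v,v⁻¹], possibly without unit) on the free 𝓐-module with basis {T̃_w 1_λ : w ∈ W, λ ∈ Λ} such that: (T̃_w 1_λ)(T̃_{w'} 1_{λ'}) = 0 if w'λ' ≠ λ; (T̃_w 1_{w'λ'})(T̃_{w'} 1_{λ'}) = T̃_{ww'} 1_{λ'} whenever ℓ(ww') = ℓ(w)+ℓ(w'); and (T̃_s 1_{sλ'})(T̃_s 1_{λ'}) = T̃_1 1_{λ'} + (v−v⁻¹) c · T̃_s 1_{λ'} for s ∈ S, where c = 1 if s ∈ W_{λ'} and c = 0 otherwise. Moreover each element 1_λ := T̃_1 1_λ is idempotent and 1_λ 1_{λ'} = 0 for λ ≠ λ'. -/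
open scoped Classical

/-!
The multiplication is built inside `Module.End` of the free module. Left multiplication by
`T̃_{s_i}` (on all `1_λ` at once) and right multiplication by `T̃_{s_{i'}} 1_{λ'}` are written
down on the basis and commute: when `s_i w ≠ w s_{i'}`, `s_i` is a left descent of `w s_{i'}`
iff it is one of `w` (and symmetrically on the right), a consequence of the exchange property,
which is proved with the reflection cocycle. Left multiplication by `T̃_w 1_λ` is the product of
the simple left multiplications along a reduced word of `w`, after the projection `1_λ`.
The `1_m` generate the module under the right multiplications by `T̃_s 1_{λ'}`, so an
endomorphism commuting with all of these is determined by its values on the `1_m`. Both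
`μ (μ x y)` and `μ x ∘ μ y` are such endomorphisms, and they agree on each `1_m`: this is
associativity.
-/

namespace CoxeterSystem

open List

variable {B W : Type*} [Group W] {M : CoxeterMatrix B} (cs : CoxeterSystem M W)

local prefix:100 "s" => cs.simple
local prefix:100 "π" => cs.wordProd
local prefix:100 "ℓ" => cs.length
local prefix:100 "ris" => cs.rightInvSeq

theorem rightInvSeq_alternatingWord (i i' : B) (m : ℕ) :
    ris (alternatingWord i i' m) = (range m).map fun k => (s i' * s i) ^ (m - k) * s i := by
  induction m generalizing i i' with
  | zero => simp [alternatingWord]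
  | succ m ih =>
    rw [alternatingWord_succ, rightInvSeq_concat, ih i' i, map_map, range_succ, map_append,
      concat_eq_append]
    congr 1
    · refine map_congr_left fun k hk => ?_
      have hk : m + 1 - k = m - k + 1 := by have := mem_range.mp hk; omega
      simp only [Function.comp_apply, MulAut.conj_apply, inv_simple, hk]
      calc s i' * ((s i * s i') ^ (m - k) * s i') * s i'
          = s i' * (s i * s i') ^ (m - k) := by
            rw [mul_assoc (s i'), simple_mul_simple_cancel_right]
        _ = (s i' * s i) ^ (m - k) * s i' := (mul_pow_mul _ _ _).symm
        _ = (s i' * s i) ^ (m - k + 1) * s i := by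
            rw [pow_succ, mul_assoc, mul_assoc, simple_mul_simple_self, mul_one]
    · simp [mul_assoc]

theorem even_count_rightInvSeq_alternatingWord (i i' : B) (t : W) :
    Even (count t (ris (alternatingWord i i' (2 * M i i')))) := by
  set m := M i i'
  set f : ℕ → W := fun k => (s i' * s i) ^ (m + m - k) * s i
  have period : (range m).map (f ∘ (m + ·)) = (range m).map f := by
    refine map_congr_left fun k hk => ?_
    have hk := mem_range.mp hk
    simp only [f, Function.comp_apply]
    rw [show m + m - k = m + (m - k) by omega, pow_add, simple_mul_simple_pow', one_mul,
      show m + m - (m + k) = m - k by omega]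
  rw [rightInvSeq_alternatingWord, two_mul, range_add, map_append, map_map, count_append, period]
  exact ⟨_, rfl⟩

/-- The action of `s i` defining the reflection cocycle `W → Equiv.Perm (W × ℤˣ)`. -/
noncomputable def cocyclePerm (i : B) : Equiv.Perm (W × ℤˣ) :=
  Function.Involutive.toPerm (fun p => (s i * p.1 * s i, if p.1 = s i then -p.2 else p.2)) <| by
    rintro ⟨t, ε⟩
    have conj_eq : s i * t * s i = s i ↔ t = s i := by
      constructor
      · intro h
        simpa [mul_assoc, simple_mul_simple_cancel_left] using congrArg (fun x => s i * x * s i) h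
      · rintro rfl
        simp
    by_cases ht : t = s i <;> simp [conj_eq, ht, ← mul_assoc]

theorem cocyclePerm_apply (i : B) (t : W) (ε : ℤˣ) :
    cs.cocyclePerm i (t, ε) = (s i * t * s i, if t = s i then -ε else ε) := rfl

theorem prod_map_cocyclePerm_apply (ω : List B) (t : W) (ε : ℤˣ) :
    (ω.map cs.cocyclePerm).prod (t, ε)
      = (π ω * t * (π ω)⁻¹, (-1) ^ count t (ris ω) * ε) := by
  induction ω generalizing ε with
  | nil => simp
  | cons i ω ih =>
    rw [map_cons, prod_cons, Equiv.Perm.mul_apply, ih]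
    have conj_wordProd :
        s i * (π ω * t * (π ω)⁻¹) * s i = π (i :: ω) * t * (π (i :: ω))⁻¹ := by
      rw [wordProd_cons, mul_inv_rev, inv_simple]
      group
    have mem_iff : π ω * t * (π ω)⁻¹ = s i ↔ (π ω)⁻¹ * s i * π ω = t := by
      constructor <;> intro h <;> rw [← h] <;> group
    have ris_cons : ris (i :: ω) = ((π ω)⁻¹ * s i * π ω) :: ris ω := rfl
    simp only [cocyclePerm_apply, conj_wordProd, ris_cons, count_cons, mem_iff, beq_iff_eq]
    split_ifs <;> simp [pow_succ]

theorem isLiftable_cocyclePerm : M.IsLiftable cs.cocyclePerm := by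
  intro i i'
  have pow_eq : ∀ m : ℕ, (cs.cocyclePerm i * cs.cocyclePerm i') ^ m
      = ((alternatingWord i i' (2 * m)).map cs.cocyclePerm).prod := by
    intro m
    induction m with
    | zero => simp [alternatingWord]
    | succ m ih =>
      rw [show 2 * (m + 1) = 2 * m + 1 + 1 by ring, alternatingWord_succ', alternatingWord_succ',
        if_neg (Nat.not_even_two_mul_add_one m), if_pos (even_two_mul m), map_cons, map_cons,
        prod_cons, prod_cons, pow_succ', ih, mul_assoc]
  have wordProd_eq : π (alternatingWord i i' (2 * M i i')) = 1 := by
    rw [prod_alternatingWord_eq_mul_pow, if_pos (even_two_mul _),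
      Nat.mul_div_cancel_left _ two_pos, one_mul, simple_mul_simple_pow]
  ext ⟨t, ε⟩ : 1
  obtain ⟨c, hc⟩ := cs.even_count_rightInvSeq_alternatingWord i i' t
  rw [pow_eq, prod_map_cocyclePerm_apply, wordProd_eq, hc, ← two_mul, pow_mul]
  simp

theorem neg_one_pow_count_rightInvSeq_eq_of_wordProd_eq {ω ω' : List B} (h : π ω = π ω')
    (t : W) :
    ((-1 : ℤˣ)) ^ count t (ris ω) = (-1) ^ count t (ris ω') := by
  have lift_wordProd : ∀ ω : List B,
      cs.lift ⟨_, cs.isLiftable_cocyclePerm⟩ (π ω) = (ω.map cs.cocyclePerm).prod := by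
    intro ω
    rw [wordProd, map_list_prod, map_map]
    congr 2
    ext i : 1
    exact cs.lift_apply_simple cs.isLiftable_cocyclePerm i
  have := congrArg (fun w => (cs.lift ⟨_, cs.isLiftable_cocyclePerm⟩ w (t, 1)).2) h
  simpa [lift_wordProd, prod_map_cocyclePerm_apply] using this

/-- The exchange property. -/
theorem simple_mem_rightInvSeq {ω : List B} {i : B}
    (hi : cs.IsRightDescent (π ω) i) : s i ∈ ris ω := by
  by_contra hmem
  obtain ⟨ω', hω', hω'_eq⟩ := cs.exists_isReduced (π ω * s i)
  have wordProd_concat_eq : π (ω'.concat i) = π ω := by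
    rw [wordProd_concat, ← hω'_eq, simple_mul_simple_cancel_right]
  have count_concat : count (s i) (ris (ω'.concat i)) = count (s i) (ris ω') + 1 := by
    rw [rightInvSeq_concat, concat_eq_append, count_append, count_singleton_self]
    congr 1
    simpa [inv_simple] using count_map_of_injective (ris ω') _ (MulAut.conj (s i)).injective (s i)
  have parity := cs.neg_one_pow_count_rightInvSeq_eq_of_wordProd_eq wordProd_concat_eq (s i)
  rw [count_concat, count_eq_zero.mpr hmem, pow_zero] at parity
  have mem' : s i ∈ ris ω' := by
    by_contra h
    rw [count_eq_zero.mpr h] at parity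
    exact absurd parity (by decide)
  have := (cs.isRightInversion_of_mem_rightInvSeq hω' mem').2
  rw [← hω'_eq, simple_mul_simple_cancel_right] at this
  exact absurd hi (by unfold IsRightDescent; omega)

theorem exists_eraseIdx_of_isRightDescent {ω : List B} {i : B}
    (hi : cs.IsRightDescent (π ω) i) : ∃ j < ω.length, π ω * s i = π (ω.eraseIdx j) := by
  obtain ⟨j, hj, hj_eq⟩ := mem_iff_getElem.mp (cs.simple_mem_rightInvSeq hi)
  refine ⟨j, by simpa using hj, ?_⟩
  rw [← hj_eq, ← getD_eq_getElem _ 1, wordProd_mul_getD_rightInvSeq]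

theorem simple_mul_eq_mul_simple {i i' : B} {w : W} (hi : cs.IsLeftDescent w i)
    (hi' : cs.IsRightDescent w i') (h : ℓ (s i * w * s i') = ℓ w) : s i * w = w * s i' := by
  obtain ⟨ω, hω, hω_eq⟩ := cs.exists_isReduced (w * s i')
  rw [IsLeftDescent] at hi
  rw [isRightDescent_iff] at hi'
  have wordProd_cons_eq : π (i :: ω) = s i * w * s i' := by
    rw [wordProd_cons, ← hω_eq, mul_assoc]
  have descent : cs.IsRightDescent (π (i :: ω)) i' := by
    rwa [IsRightDescent, wordProd_cons_eq, simple_mul_simple_cancel_right, h]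
  obtain ⟨j, -, hj_eq⟩ := cs.exists_eraseIdx_of_isRightDescent descent
  rw [wordProd_cons_eq, simple_mul_simple_cancel_right] at hj_eq
  cases j with
  | zero => rwa [eraseIdx_cons_zero, ← hω_eq] at hj_eq
  | succ j =>
    rw [eraseIdx_cons_succ, wordProd_cons, mul_right_inj] at hj_eq
    have length_le := cs.length_wordProd_le (ω.eraseIdx j)
    have := length_eraseIdx_le ω j
    rw [← hj_eq] at length_le
    rw [IsReduced, ← hω_eq] at hω
    omega

theorem isLeftDescent_mul_simple {i i' : B} {w : W} (hne : s i * w ≠ w * s i')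
    (hw : cs.IsLeftDescent w i) : cs.IsLeftDescent (w * s i') i := by
  by_contra hc
  rw [isLeftDescent_iff] at hw
  rw [not_isLeftDescent_iff, ← mul_assoc] at hc
  have := cs.length_mul_simple (s i * w) i'
  rcases cs.length_mul_simple w i' with hup | hdown
  · omega
  · exact hne (cs.simple_mul_eq_mul_simple (by rw [isLeftDescent_iff]; exact hw)
      (by rw [isRightDescent_iff]; exact hdown) (by omega))

theorem isLeftDescent_mul_simple_iff {i i' : B} {w : W} (hne : s i * w ≠ w * s i') :
    cs.IsLeftDescent (w * s i') i ↔ cs.IsLeftDescent w i := by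
  refine ⟨fun h => ?_, cs.isLeftDescent_mul_simple hne⟩
  have hne' : s i * (w * s i') ≠ w * s i' * s i' := fun h' => by
    rw [simple_mul_simple_cancel_right, ← mul_assoc] at h'
    exact hne (by rw [← cs.simple_mul_simple_cancel_right (w := s i * w) i', h'])
  simpa [simple_mul_simple_cancel_right] using cs.isLeftDescent_mul_simple hne' h

theorem isRightDescent_simple_mul_iff {i i' : B} {w : W} (hne : s i * w ≠ w * s i') :
    cs.IsRightDescent (s i * w) i' ↔ cs.IsRightDescent w i' := by
  rw [← isLeftDescent_inv_iff, ← isLeftDescent_inv_iff, mul_inv_rev, inv_simple]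
  refine cs.isLeftDescent_mul_simple_iff fun h => hne ?_
  simpa [inv_simple] using congrArg (·⁻¹) h.symm

end CoxeterSystem

namespace HeckeWithCharacters

open CoxeterSystem Finsupp

local notation "A" => LaurentPolynomial ℤ
local notation "𝐪" => (LaurentPolynomial.T 1 - LaurentPolynomial.T (-1) : LaurentPolynomial ℤ)

section

variable {W Λ : Type*}

/-- Right multiplication by `1_m`. -/
noncomputable def rightMulIdem (m : Λ) : Module.End A ((W × Λ) →₀ A) :=
  linearCombination A fun p : W × Λ => if p.2 = m then single p 1 else 0

theorem rightMulIdem_single (m : Λ) (w : W) (l : Λ) :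
    rightMulIdem m (single (w, l) (1 : A)) = if l = m then single (w, l) 1 else 0 := by
  simp [rightMulIdem]

end

variable {B W : Type*} [Group W] {M : CoxeterMatrix B} (cs : CoxeterSystem M W)
  {Λ : Type*} [MulAction W Λ] (Wsub : Λ → Subgroup W)

local prefix:100 "s" => cs.simple
local prefix:100 "π" => cs.wordProd
local prefix:100 "ℓ" => cs.length
local notation "X" => (W × Λ) →₀ LaurentPolynomial ℤ

structure IsNormalizedFamily : Prop where
  le_stabilizer : ∀ l : Λ, Wsub l ≤ MulAction.stabilizer W l
  map_conj : ∀ (w : W) (l : Λ),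
    Wsub (w • l) = Subgroup.map (MulAut.conj w).toMonoidHom (Wsub l)

/-- Left multiplication by `T̃_{s_i}`, on all components `1_λ` at once. -/
noncomputable def leftMulSimple (i : B) : Module.End A X :=
  linearCombination A fun p : W × Λ =>
    single (s i * p.1, p.2) 1 +
      (if cs.IsLeftDescent p.1 i ∧ s i ∈ Wsub (p.1 • p.2) then 𝐪 else 0) • single p 1

/-- Right multiplication by `T̃_{s_i} 1_{λ'}`. -/
noncomputable def rightMulSimple (i : B) (l' : Λ) : Module.End A X :=
  linearCombination A fun p : W × Λ =>
    if s i • l' = p.2 then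
      single (p.1 * s i, l') 1 +
        (if cs.IsRightDescent p.1 i ∧ s i ∈ Wsub l' then 𝐪 else 0) • single (p.1, l') 1
    else 0

/-- Left multiplication by `1_m`. -/
noncomputable def leftMulIdem (m : Λ) : Module.End A X :=
  linearCombination A fun p : W × Λ => if p.1 • p.2 = m then single p 1 else 0

theorem leftMulSimple_single (i : B) (w : W) (l : Λ) :
    leftMulSimple cs Wsub i (single (w, l) 1) =
      single (s i * w, l) 1 +
        (if cs.IsLeftDescent w i ∧ s i ∈ Wsub (w • l) then 𝐪 else 0) • single (w, l) 1 := by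
  simp [leftMulSimple]

theorem rightMulSimple_single (i : B) (l' : Λ) (w : W) (l : Λ) :
    rightMulSimple cs Wsub i l' (single (w, l) 1) =
      if s i • l' = l then
        single (w * s i, l') 1 +
          (if cs.IsRightDescent w i ∧ s i ∈ Wsub l' then 𝐪 else 0) • single (w, l') 1
      else 0 := by
  simp [rightMulSimple]

theorem leftMulIdem_single (m : Λ) (w : W) (l : Λ) :
    leftMulIdem m (single (w, l) (1 : A)) = if w • l = m then single (w, l) 1 else 0 := by
  simp [leftMulIdem]

theorem commute_rightMulIdem_leftMulSimple (m : Λ) (i : B) :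
    Commute (rightMulIdem m) (leftMulSimple cs Wsub i) := by
  refine Finsupp.basisSingleOne.ext fun ⟨w, l⟩ => ?_
  by_cases hl : l = m
  · simp only [coe_basisSingleOne, Module.End.mul_apply, leftMulSimple_single, rightMulIdem_single,
      map_add, map_smul, if_pos hl]
  · simp only [coe_basisSingleOne, Module.End.mul_apply, leftMulSimple_single, rightMulIdem_single,
      map_add, map_smul, if_neg hl, map_zero, smul_zero, add_zero]

theorem commute_rightMulIdem_leftMulIdem (m m' : Λ) :
    Commute (rightMulIdem m) (leftMulIdem m' : Module.End A X) := by
  refine Finsupp.basisSingleOne.ext fun ⟨w, l⟩ => ?_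
  rcases eq_or_ne l m with rfl | hl <;> by_cases hm : w • l = m' <;>
    simp [leftMulIdem_single, rightMulIdem_single, *]

theorem mem_smul_iff_conj_mem (hconj : ∀ (w : W) (l : Λ),
      Wsub (w • l) = Subgroup.map (MulAut.conj w).toMonoidHom (Wsub l))
    (u x : W) (l : Λ) : x ∈ Wsub (u • l) ↔ u⁻¹ * x * u ∈ Wsub l := by
  rw [hconj, Subgroup.mem_map_equiv, MulAut.conj_symm_apply]

theorem commute_leftMulIdem_rightMulSimple
    (hstab : ∀ l : Λ, Wsub l ≤ MulAction.stabilizer W l) (m : Λ) (i : B) (l' : Λ) :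
    Commute (leftMulIdem m) (rightMulSimple cs Wsub i l') := by
  refine Finsupp.basisSingleOne.ext fun ⟨w, l⟩ => ?_
  simp only [coe_basisSingleOne, Module.End.mul_apply]
  rcases eq_or_ne (s i • l') l with rfl | hll
  · by_cases hmem : s i ∈ Wsub l'
    · have hfix : s i • l' = l' := hstab l' hmem
      rw [hfix]
      by_cases hm : w • l' = m <;>
        simp only [rightMulSimple_single, leftMulIdem_single, hfix, mul_smul, if_true, hm,
          map_add, map_smul, map_zero, if_false, smul_zero, add_zero]
    · by_cases hm : w • s i • l' = m <;>
        simp only [rightMulSimple_single, leftMulIdem_single, mul_smul, hmem, and_false, if_true,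
          if_false, hm, map_zero, zero_smul, add_zero]
  · by_cases hm : w • l = m <;>
      simp only [rightMulSimple_single, leftMulIdem_single, hll, hm, if_false, if_true, map_zero]

theorem simple_mem_iff_of_simple_mul_eq (hconj : ∀ (w : W) (l : Λ),
      Wsub (w • l) = Subgroup.map (MulAut.conj w).toMonoidHom (Wsub l))
    {i i' : B} {w : W} (hz : s i * w = w * s i') (l' : Λ) :
    s i ∈ Wsub (w • s i' • l') ↔ s i' ∈ Wsub l' := by
  have conj_eq : (w * s i')⁻¹ * s i * (w * s i') = s i' := calc
    _ = (w * s i')⁻¹ * (s i * w) * s i' := by group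
    _ = s i' := by rw [hz]; group
  rw [← mul_smul, mem_smul_iff_conj_mem Wsub hconj, conj_eq]

theorem commute_leftMulSimple_rightMulSimple
    (hW : IsNormalizedFamily Wsub) (i i' : B) (l' : Λ) :
    Commute (leftMulSimple cs Wsub i) (rightMulSimple cs Wsub i' l') := by
  refine Finsupp.basisSingleOne.ext fun ⟨w, l⟩ => ?_
  simp only [coe_basisSingleOne, Module.End.mul_apply]
  rcases eq_or_ne (s i' • l') l with rfl | hll
  swap
  · simp only [rightMulSimple_single, leftMulSimple_single, hll, if_false, map_zero, map_add,
      map_smul, smul_zero, add_zero]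
  simp only [rightMulSimple_single, leftMulSimple_single, if_true, map_add, map_smul, mul_smul,
    ← mul_assoc]
  by_cases hz : s i * w = w * s i'
  · have left_iff : cs.IsLeftDescent w i ↔ cs.IsRightDescent w i' := by
      rw [IsLeftDescent, IsRightDescent, hz]
    have left_mul_iff : cs.IsLeftDescent (w * s i') i ↔ ¬cs.IsRightDescent w i' := by
      rw [isRightDescent_iff_not_isRightDescent_mul, not_not, IsLeftDescent, IsRightDescent,
        ← mul_assoc, hz]
    have right_mul_iff : cs.IsRightDescent (w * s i') i' ↔ ¬cs.IsRightDescent w i' :=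
      iff_not_comm.mp cs.isRightDescent_iff_not_isRightDescent_mul
    rw [hz, simple_mul_simple_cancel_right, left_iff, left_mul_iff, right_mul_iff,
      simple_mem_iff_of_simple_mul_eq cs Wsub hW.map_conj hz]
    by_cases hmem : s i' ∈ Wsub l'
    · have hfix : s i' • l' = l' := hW.le_stabilizer l' hmem
      have hmem' : s i ∈ Wsub (w • l') := by
        rwa [← hfix, simple_mem_iff_of_simple_mul_eq cs Wsub hW.map_conj hz]
      simp only [hmem, hmem', and_true]
    · simp only [hmem, and_false, if_false, zero_smul, add_zero]
  · rw [cs.isLeftDescent_mul_simple_iff hz, cs.isRightDescent_simple_mul_iff hz]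
    by_cases hmem : s i' ∈ Wsub l'
    · have hfix : s i' • l' = l' := hW.le_stabilizer l' hmem
      rw [hfix]
      module
    · simp only [hmem, and_false, if_false, zero_smul, add_zero]

theorem prod_map_leftMulSimple_single {ω : List B} {w : W}
    (h : ℓ (π ω * w) = ω.length + ℓ w) (l : Λ) :
    (ω.map (leftMulSimple cs Wsub)).prod (single (w, l) 1) = single (π ω * w, l) 1 := by
  induction ω with
  | nil => simp
  | cons i ω ih =>
    rw [wordProd_cons, mul_assoc, List.length_cons] at h
    have := cs.length_mul_le (π ω) w
    have := cs.length_wordProd_le ω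
    have := cs.length_simple_mul (π ω * w) i
    have not_descent : ¬cs.IsLeftDescent (π ω * w) i := by rw [IsLeftDescent]; omega
    rw [List.map_cons, List.prod_cons, Module.End.mul_apply, ih (by omega), leftMulSimple_single,
      wordProd_cons, mul_assoc]
    simp [not_descent]

/-- Left multiplication by `T̃_w 1_l`. -/
noncomputable def leftMul (w : W) (l : Λ) : Module.End A X :=
  ((cs.exists_isReduced w).choose.map (leftMulSimple cs Wsub)).prod * leftMulIdem l

theorem leftMul_single_of_smul_ne {w w' : W} {l l' : Λ} (h : w' • l' ≠ l) :
    leftMul cs Wsub w l (single (w', l') 1) = 0 := by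
  simp [leftMul, leftMulIdem_single, h]

theorem leftMul_single_of_length_mul {w w' : W} (h : ℓ (w * w') = ℓ w + ℓ w') (l' : Λ) :
    leftMul cs Wsub w (w' • l') (single (w', l') 1) = single (w * w', l') 1 := by
  obtain ⟨hred, hw⟩ := (cs.exists_isReduced w).choose_spec
  rw [leftMul, Module.End.mul_apply, leftMulIdem_single, if_pos rfl,
    prod_map_leftMulSimple_single _ _ (by rw [← hw, h, ← hred, ← hw]), ← hw]

theorem leftMul_single_one (w : W) (l m : Λ) :
    leftMul cs Wsub w l (single (1, m) 1) = if m = l then single (w, l) 1 else 0 := by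
  split_ifs with h
  · subst h
    simpa using leftMul_single_of_length_mul cs Wsub (w' := 1) (by simp) m
  · exact leftMul_single_of_smul_ne cs Wsub (by simpa using h)

theorem commute_leftMul_rightMulSimple
    (hW : IsNormalizedFamily Wsub) (w : W) (l : Λ) (i' : B) (l' : Λ) :
    Commute (leftMul cs Wsub w l) (rightMulSimple cs Wsub i' l') := by
  refine Commute.mul_left (Commute.list_prod_left _ _ fun T hT => ?_)
    (commute_leftMulIdem_rightMulSimple cs Wsub hW.le_stabilizer l i' l')
  obtain ⟨i, -, rfl⟩ := List.mem_map.mp hT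
  exact commute_leftMulSimple_rightMulSimple cs Wsub hW i i' l'

theorem commute_rightMulIdem_leftMul (m : Λ) (w : W) (l : Λ) :
    Commute (rightMulIdem m) (leftMul cs Wsub w l) := by
  refine Commute.mul_right (Commute.list_prod_right _ _ fun T hT => ?_)
    (commute_rightMulIdem_leftMulIdem m l)
  obtain ⟨i, -, rfl⟩ := List.mem_map.mp hT
  exact commute_rightMulIdem_leftMulSimple cs Wsub m i

noncomputable def heckeMul : X →ₗ[A] X →ₗ[A] X :=
  linearCombination A fun p : W × Λ => leftMul cs Wsub p.1 p.2

theorem heckeMul_single (w : W) (l : Λ) :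
    heckeMul cs Wsub (single (w, l) 1) = leftMul cs Wsub w l := by
  simp [heckeMul]

theorem commute_heckeMul {T : Module.End A X} (h : ∀ w l, Commute (leftMul cs Wsub w l) T)
    (x : X) : Commute (heckeMul cs Wsub x) T := by
  induction x using Finsupp.induction_linear with
  | zero => simp
  | add x y hx hy => rw [map_add]; exact hx.add_left hy
  | single p c =>
    rw [heckeMul, linearCombination_single]
    exact (h p.1 p.2).smul_left c

theorem heckeMul_apply_single_one (x : X) (m : Λ) :
    heckeMul cs Wsub x (single (1, m) 1) = rightMulIdem m x := by
  suffices (heckeMul cs Wsub).flip (single (1, m) 1) = rightMulIdem m from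
    LinearMap.congr_fun this x
  refine Finsupp.basisSingleOne.ext fun ⟨w, l⟩ => ?_
  simp [heckeMul_single, leftMul_single_one, rightMulIdem_single, eq_comm]

theorem eq_of_commute_rightMulSimple {F G : Module.End A X}
    (hF : ∀ i l, Commute F (rightMulSimple cs Wsub i l))
    (hG : ∀ i l, Commute G (rightMulSimple cs Wsub i l))
    (h : ∀ m, F (single (1, m) 1) = G (single (1, m) 1)) : F = G := by
  refine Finsupp.basisSingleOne.ext fun ⟨w, l⟩ => ?_
  simp only [coe_basisSingleOne]
  induction w using cs.simple_induction_right generalizing l with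
  | one => exact h l
  | mul_simple_right w i ih =>
    obtain ⟨c, hc⟩ : ∃ c : A, rightMulSimple cs Wsub i l (single (w, s i • l) 1)
        = single (w * s i, l) 1 + c • single (w, l) 1 :=
      ⟨_, by rw [rightMulSimple_single, if_pos rfl]⟩
    set v := single (w, s i • l) (1 : A)
    have commute_apply : F (rightMulSimple cs Wsub i l v) = G (rightMulSimple cs Wsub i l v) := calc
      _ = rightMulSimple cs Wsub i l (F v) := LinearMap.congr_fun (hF i l).eq v
      _ = rightMulSimple cs Wsub i l (G v) := by rw [ih]
      _ = G (rightMulSimple cs Wsub i l v) := (LinearMap.congr_fun (hG i l).eq v).symm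
    rw [eq_sub_of_add_eq hc.symm, map_sub, map_sub, map_smul, map_smul, ih l, commute_apply]

theorem commute_heckeMul_rightMulSimple (hW : IsNormalizedFamily Wsub) (x : X) (i : B)
    (l : Λ) : Commute (heckeMul cs Wsub x) (rightMulSimple cs Wsub i l) :=
  commute_heckeMul cs Wsub (fun w l' => commute_leftMul_rightMulSimple cs Wsub hW w l' i l) x

theorem heckeMul_heckeMul (hW : IsNormalizedFamily Wsub) (x y : X) :
    heckeMul cs Wsub (heckeMul cs Wsub x y) = heckeMul cs Wsub x * heckeMul cs Wsub y := by
  refine eq_of_commute_rightMulSimple cs Wsub (commute_heckeMul_rightMulSimple cs Wsub hW _)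
    (fun i l => (commute_heckeMul_rightMulSimple cs Wsub hW x i l).mul_left
      (commute_heckeMul_rightMulSimple cs Wsub hW y i l)) fun m => ?_
  have commute_idem := commute_heckeMul cs Wsub
    (fun w l => (commute_rightMulIdem_leftMul cs Wsub m w l).symm) x
  rw [Module.End.mul_apply, heckeMul_apply_single_one, heckeMul_apply_single_one,
    ← Module.End.mul_apply, ← commute_idem.eq, Module.End.mul_apply]

theorem heckeMul_simple (hW : IsNormalizedFamily Wsub) (i : B) (l' : Λ) :
    heckeMul cs Wsub (single (s i, s i • l') 1) (single (s i, l') 1)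
      = single (1, l') 1 + (if s i ∈ Wsub l' then 𝐪 else 0) • single (s i, l') 1 := by
  have single_eq :
      single (s i, l') (1 : A) = rightMulSimple cs Wsub i l' (single (1, s i • l') 1) := by
    simp [rightMulSimple_single, cs.not_isRightDescent_one]
  have descent : cs.IsRightDescent (s i) i := by simp [IsRightDescent]
  conv_lhs => rw [single_eq]
  rw [← Module.End.mul_apply, (commute_heckeMul_rightMulSimple cs Wsub hW _ i l').eq,
    Module.End.mul_apply, heckeMul_single, leftMul_single_one, if_pos rfl, rightMulSimple_single,
    if_pos rfl, simple_mul_simple_self]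
  simp [descent]

end HeckeWithCharacters

/-- The Hecke algebra attached to a `W`-set `Λ` and a family of subgroups
`W_λ ⊆ Stab_W(λ)` with `W_{wλ} = w W_λ w⁻¹`:  on the free `ℤ[v,v⁻¹]`-module with basis
`{T̃_w 1_λ : w ∈ W, λ ∈ Λ}` there is an associative bilinear multiplication `μ` with
`(T̃_w 1_λ)(T̃_{w'} 1_{λ'}) = 0` if `w'λ' ≠ λ`;
`(T̃_w 1_{w'λ'})(T̃_{w'} 1_{λ'}) = T̃_{ww'} 1_{λ'}` when `ℓ(ww') = ℓ(w)+ℓ(w')`;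
`(T̃_s 1_{sλ'})(T̃_s 1_{λ'}) = T̃_1 1_{λ'} + (v−v⁻¹) c T̃_s 1_{λ'}` with `c = 1` iff
`s ∈ W_{λ'}`; moreover the `1_λ = T̃_1 1_λ` are orthogonal idempotents. -/
theorem hecke_algebra_with_characters_exists
    {B W : Type*} [Group W] {M : CoxeterMatrix B} (cs : CoxeterSystem M W)
    {Λ : Type*} [MulAction W Λ]
    (Wsub : Λ → Subgroup W)
    (hstab : ∀ l : Λ, Wsub l ≤ MulAction.stabilizer W l)
    (hconj : ∀ (w : W) (l : Λ),
      Wsub (w • l) = Subgroup.map (MulAut.conj w).toMonoidHom (Wsub l)) :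
    ∃ μ : ((W × Λ) →₀ LaurentPolynomial ℤ) →ₗ[LaurentPolynomial ℤ]
          ((W × Λ) →₀ LaurentPolynomial ℤ) →ₗ[LaurentPolynomial ℤ]
          ((W × Λ) →₀ LaurentPolynomial ℤ),
      (∀ x y z, μ (μ x y) z = μ x (μ y z)) ∧
      (∀ (w w' : W) (l l' : Λ), w' • l' ≠ l →
        μ (Finsupp.single (w, l) 1) (Finsupp.single (w', l') 1) = 0) ∧
      (∀ (w w' : W) (l' : Λ), cs.length (w * w') = cs.length w + cs.length w' →
        μ (Finsupp.single (w, w' • l') 1) (Finsupp.single (w', l') 1)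
          = Finsupp.single (w * w', l') 1) ∧
      (∀ (i : B) (l' : Λ),
        μ (Finsupp.single (cs.simple i, cs.simple i • l') 1)
            (Finsupp.single (cs.simple i, l') 1)
          = Finsupp.single ((1 : W), l') 1 +
            (if cs.simple i ∈ Wsub l' then
              ((LaurentPolynomial.T 1 - LaurentPolynomial.T (-1) : LaurentPolynomial ℤ))
            else 0) • Finsupp.single (cs.simple i, l') 1) ∧
      (∀ l : Λ, μ (Finsupp.single ((1 : W), l) 1) (Finsupp.single ((1 : W), l) 1)
          = Finsupp.single ((1 : W), l) 1) ∧
      (∀ l l' : Λ, l ≠ l' →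
        μ (Finsupp.single ((1 : W), l) 1) (Finsupp.single ((1 : W), l') 1) = 0) := by
  open HeckeWithCharacters in
  have hW : IsNormalizedFamily Wsub := ⟨hstab, hconj⟩
  refine ⟨heckeMul cs Wsub, fun x y z => ?_, fun w w' l l' h => ?_, fun w w' l' h => ?_,
    heckeMul_simple cs Wsub hW, fun l => ?_, fun l l' h => ?_⟩
  · rw [heckeMul_heckeMul cs Wsub hW, Module.End.mul_apply]
  · rw [heckeMul_single, leftMul_single_of_smul_ne cs Wsub h]
  · rw [heckeMul_single, leftMul_single_of_length_mul cs Wsub h]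
  · rw [heckeMul_single, leftMul_single_one, if_pos rfl]
  · rw [heckeMul_single, leftMul_single_one, if_neg (Ne.symm h)]
end

section
/- Let D be a triangulated category with a bounded t-structure with heart an abelian category in which every object has finite length, let F : D → D' be a triangulated functor to another triangulated category with a bounded t-structure, and let A be a simple object of the heart of D'. Suppose K ∈ D is bounded (ᵖτ_{≤n} K = 0 for n ≪ 0 and ᵖτ_{≤n}K = K for n ≫ 0). If A is not a subquotient of ᵖH^i(F(ᵖH^j(K))) for any i, j ∈ ℤ, then A is not a subquotient of ᵖH^i(F(K)) for any i ∈ ℤ. -/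
open CategoryTheory Limits Pretriangulated

/-- `X` is a subquotient of `P` (for simple `X` in an abelian category this is the same
as `X` being a composition factor of `P`). -/
def IsSubquotient {A : Type*} [Category A] [Abelian A] (X P : A) : Prop :=
  ∃ (Q : A) (i : Q ⟶ P) (p : Q ⟶ X), Mono i ∧ Epi p

lemma IsSubquotient.of_iso {A : Type*} [Category A] [Abelian A] {X P P' : A}
    (e : P ≅ P') (h : IsSubquotient X P) : IsSubquotient X P' := by
  obtain ⟨Q, i, p, hi, hp⟩ := h
  exact ⟨Q, i ≫ e.hom, p, mono_comp _ _, hp⟩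

lemma not_isSubquotient_of_isZero {A' : Type*} [Category A'] [Abelian A'] {X P : A'}
    [Simple X] (hP : IsZero P) : ¬ IsSubquotient X P := by
  rintro ⟨Q, i, p, hi, hp⟩
  have hQ : IsZero Q := IsZero.of_mono i hP
  have hpz : p = 0 := hQ.eq_zero_of_src p
  have hid : (𝟙 X) = 0 := by
    rw [← cancel_epi p, hpz, Category.comp_id, Limits.comp_zero]
  exact Simple.not_isZero X ((IsZero.iff_id_eq_zero X).2 hid)

/-- If `A` is simple and a subquotient of the middle term of an exact sequence, it is a
subquotient of one of the outer terms. -/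
lemma isSubquotient_of_exact {A' : Type*} [Category A'] [Abelian A'] {A : A'} [Simple A]
    (S : ShortComplex A') (hS : S.Exact) (h : IsSubquotient A S.X₂) :
    IsSubquotient A S.X₁ ∨ IsSubquotient A S.X₃ := by
  obtain ⟨Q, i, p, hi, hp⟩ := h
  by_cases hz : kernel.ι (i ≫ S.g) ≫ p = 0
  · right
    refine ⟨Abelian.coimage (i ≫ S.g), Abelian.factorThruCoimage (i ≫ S.g),
      cokernel.desc _ p hz, inferInstance, ?_⟩
    exact epi_of_epi_fac (cokernel.π_desc _ p hz)
  · left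
    set k : kernel (i ≫ S.g) ⟶ Q := kernel.ι (i ≫ S.g) with hk
    have him : IsIso (image.ι (k ≫ p)) := by
      refine isIso_of_mono_of_nonzero (fun h0 => hz ?_)
      rw [← image.fac (k ≫ p), h0, comp_zero]
    have hkp : Epi (k ≫ p) := by
      rw [← image.fac (k ≫ p)]
      exact epi_comp _ _
    have hw : (k ≫ i) ≫ S.g = 0 := by
      rw [Category.assoc]; exact kernel.condition (i ≫ S.g)
    set l : kernel (i ≫ S.g) ⟶ S.cycles := S.liftCycles (k ≫ i) hw with hl
    have hml : Mono l := by
      have hfac : l ≫ S.iCycles = k ≫ i := S.liftCycles_i _ _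
      exact mono_of_mono_fac hfac
    have := hS.epi_toCycles
    have hfst : Epi (pullback.fst l S.toCycles) := Abelian.epi_pullback_of_epi_g _ _
    exact ⟨pullback l S.toCycles, pullback.snd l S.toCycles,
      pullback.fst l S.toCycles ≫ (k ≫ p), inferInstance, epi_comp _ _⟩

/-- Abstract form of the truncation argument: let `D`, `D'` be (pre)triangulated
categories, `F : D ⥤ D'` a triangulated functor, `A'` an abelian category (the heart of a
bounded t-structure on `D'`) and `Hl : D' ⥤ A'` a homological functor, so that
`ᵖH^i(X) = Hl (X⟦i⟧)`.  Let `K ∈ D` be bounded: there are truncations `Kt n` (`ᵖτ_{≤n} K`)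
with `Kt n = 0` for `n ≤ n₀`, `Kt n ≅ K` for `n ≥ n₁`, and distinguished triangles
`(ᵖτ_{≤n−1} K, ᵖτ_{≤n} K, ᵖH^n(K)[−n])`, where `P n ∈ D` is the object of the heart of `D`
corresponding to `ᵖH^n(K)`.  If the simple object `A` of `A'` is not a subquotient of any
`ᵖH^i(F(ᵖH^j(K)))`, then `A` is not a subquotient of any `ᵖH^i(F(K))`. -/
theorem not_subquotient_of_truncations
    {D : Type*} [Category D] [Preadditive D] [HasZeroObject D] [HasShift D ℤ]
    [∀ n : ℤ, (shiftFunctor D n).Additive] [Pretriangulated D]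
    {D' : Type*} [Category D'] [Preadditive D'] [HasZeroObject D'] [HasShift D' ℤ]
    [∀ n : ℤ, (shiftFunctor D' n).Additive] [Pretriangulated D']
    {A' : Type*} [Category A'] [Abelian A']
    (F : D ⥤ D') [F.CommShift ℤ] [F.IsTriangulated]
    (Hl : D' ⥤ A') [Hl.IsHomological]
    (A : A') [Simple A]
    (K : D) (n₀ n₁ : ℤ)
    (Kt : ℤ → D) (P : ℤ → D)
    (hlow : ∀ n ≤ n₀, IsZero (Kt n))
    (hhigh : ∀ n ≥ n₁, Nonempty (Kt n ≅ K))
    (htri : ∀ n : ℤ, ∃ (f : Kt (n - 1) ⟶ Kt n) (g : Kt n ⟶ (P n)⟦(-n : ℤ)⟧)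
      (h : (P n)⟦(-n : ℤ)⟧ ⟶ (Kt (n - 1))⟦(1 : ℤ)⟧),
      Triangle.mk f g h ∈ distTriang D)
    (hyp : ∀ i j : ℤ, ¬ IsSubquotient A (Hl.obj ((F.obj (P j))⟦i⟧))) :
    ∀ i : ℤ, ¬ IsSubquotient A (Hl.obj ((F.obj K)⟦i⟧)) := by
  -- main claim by induction on n
  have claim : ∀ n, n₀ ≤ n → ∀ i : ℤ, ¬ IsSubquotient A (Hl.obj ((F.obj (Kt n))⟦i⟧)) := by
    refine Int.le_induction ?_ ?_
    · intro i
      have hz : IsZero (Kt n₀) := hlow n₀ le_rfl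
      have hz' : IsZero (Hl.obj ((F.obj (Kt n₀))⟦i⟧)) :=
        Hl.map_isZero ((shiftFunctor D' i).map_isZero (F.map_isZero hz))
      exact not_isSubquotient_of_isZero hz'
    · intro n hn ih i hsub
      obtain ⟨f, g, h, hT⟩ := htri (n + 1)
      have hn1 : (n + 1 : ℤ) - 1 = n := by ring
      have hT' : (Triangle.shiftFunctor D' i).obj (F.mapTriangle.obj (Triangle.mk f g h))
          ∈ distTriang D' :=
        Triangle.shift_distinguished _ (F.map_distinguished _ hT) i
      have hex := Hl.map_distinguished_exact _ hT'
      have hsub' : IsSubquotient A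
          (((shortComplexOfDistTriangle _ hT').map Hl).X₂) := hsub
      rcases isSubquotient_of_exact _ hex hsub' with h1 | h3
      · -- subquotient of Hl ((F (Kt ((n+1)-1)))⟦i⟧)
        apply ih i
        have e : Kt ((n + 1 : ℤ) - 1) ≅ Kt n := eqToIso (by rw [hn1])
        exact h1.of_iso (Hl.mapIso ((shiftFunctor D' i).mapIso (F.mapIso e)))
      · -- subquotient coming from P (n+1)
        apply hyp ((-(n+1)) + i) (n + 1)
        refine h3.of_iso ?_
        refine Hl.mapIso ?_
        exact ((shiftFunctor D' i).mapIso ((F.commShiftIso (-(n+1) : ℤ)).app (P (n+1)))) ≪≫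
          ((shiftFunctorAdd D' (-(n+1) : ℤ) i).symm.app (F.obj (P (n+1))))
  intro i hsub
  set n := max n₀ n₁ with hnn
  obtain ⟨e⟩ := hhigh n (le_max_right _ _)
  exact claim n (le_max_left _ _) i
    (hsub.of_iso (Hl.mapIso ((shiftFunctor D' i).mapIso (F.mapIso e.symm))))
end
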